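/- Let W be a nonempty finite set, (J_v)_{v∈W} a family of finite abelian groups, H = ∏_{v∈W} J_v, and set d := |W| − 1. Let I(H) ⊂ ℤ[H] be the augmentation ideal. Let M be any ℤ-module, and for X ⊆ W let π_X also denote the endomorphism of M ⊗_ℤ ℤ[H]/I(H)^{d+1} induced by π_X (which is well defined since π_X(I(H)) ⊆ I(H)). Then for every a ∈ M ⊗_ℤ ℤ[H]/I(H)^{d+1}, one has a = −∑_{X ⊆ W, X ≠ W} (−1)^{|W∖X|} π_X(a). -/

import Mathlib

/-! With `e_v σ := Pi.mulSingle v (σ v)` one has `π_X σ = ∏_{v ∈ X} e_v σ`, so the alternating sum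
`∑_X (-1)^|W∖X| [π_X σ]` is the expansion of `∏_v ([e_v σ] - 1)`, a product of `|W|` elements of
`I(H)`. By linearity `∑_X (-1)^|W∖X| π_X` maps `ℤ[H]` into `I(H)^|W|`, so it vanishes on
`M ⊗ ℤ[H]/I(H)^|W|`; the summand for `X = W` is the identity. -/

open TensorProduct

/-- For a subset `X ⊆ W`, the group endomorphism `π_X` of `H = ∏_{v ∈ W} J v` which replaces
the `v`-component by the identity for every `v ∉ X` and leaves the `v`-component unchanged for
`v ∈ X`. -/
def piProj {W : Type*} [DecidableEq W] (J : W → Type*) [∀ v, CommGroup (J v)]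
    (X : Finset W) : (∀ v, J v) →* (∀ v, J v) :=
  MonoidHom.mk' (fun σ v => if v ∈ X then σ v else 1) (by
    intro a b
    funext v
    by_cases h : v ∈ X <;> simp [h])

/-- The augmentation ideal `I(H)` of the group ring `ℤ[H]`: the kernel of the ring
homomorphism `ℤ[H] → ℤ` sending every group element to `1`. -/
noncomputable def augmentationIdeal (H : Type*) [CommGroup H] :
    Ideal (MonoidAlgebra ℤ H) :=
  RingHom.ker (MonoidAlgebra.lift ℤ ℤ H 1)

lemma Ideal.prod_mem_pow_card {R ι : Type*} [CommSemiring R] (I : Ideal R) {s : Finset ι}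
    {x : ι → R} (h : ∀ i ∈ s, x i ∈ I) : ∏ i ∈ s, x i ∈ I ^ s.card := by
  simpa using Ideal.prod_mem_prod h

lemma TensorProduct.ext_quotient_mk {R M N : Type*} [CommRing R] [AddCommGroup M]
    [AddCommGroup N] {I : Ideal R} {f f' : M ⊗[ℤ] (R ⧸ I) →ₗ[ℤ] N}
    (h : ∀ m z, f (m ⊗ₜ Ideal.Quotient.mk I z) = f' (m ⊗ₜ Ideal.Quotient.mk I z)) : f = f' :=
  TensorProduct.ext' fun m q => by
    obtain ⟨z, rfl⟩ := Ideal.Quotient.mk_surjective q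
    exact h m z

lemma MonoidAlgebra.mapDomainRingHom_of {R M N : Type*} [Semiring R] [Monoid M] [Monoid N]
    (f : M →* N) (m : M) : mapDomainRingHom R f (of R M m) = of R N (f m) := by
  simp [of_apply, mapDomain_single]

lemma of_sub_one_mem_augmentationIdeal {H : Type*} [CommGroup H] (h : H) :
    MonoidAlgebra.of ℤ H h - 1 ∈ augmentationIdeal H := by
  simp [augmentationIdeal]

section piProj

variable {W : Type*} [Fintype W] [DecidableEq W] (J : W → Type*) [∀ v, CommGroup (J v)]

lemma piProj_univ : piProj J Finset.univ = MonoidHom.id (∀ v, J v) := by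
  ext σ
  simp [piProj]

omit [Fintype W] in
lemma piProj_apply_eq_prod_mulSingle (X : Finset W) (σ : ∀ v, J v) :
    piProj J X σ = ∏ v ∈ X, Pi.mulSingle v (σ v) := by
  funext w
  simp [Finset.prod_apply, piProj]

lemma sum_neg_one_pow_smul_of_piProj (σ : ∀ v, J v) :
    ∑ X : Finset W, (-1 : ℤ) ^ (Finset.univ \ X).card •
        MonoidAlgebra.of ℤ (∀ v, J v) (piProj J X σ) =
      ∏ v, (MonoidAlgebra.of ℤ (∀ v, J v) (Pi.mulSingle v (σ v)) - 1) := by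
  simp_rw [sub_eq_add_neg, Finset.prod_add, Finset.powerset_univ, Finset.prod_const,
    piProj_apply_eq_prod_mulSingle, map_prod, zsmul_eq_mul, mul_comm]
  push_cast
  rfl

lemma sum_neg_one_pow_smul_mapDomain_piProj_mem (z : MonoidAlgebra ℤ (∀ v, J v)) :
    ∑ X : Finset W, (-1 : ℤ) ^ (Finset.univ \ X).card •
        MonoidAlgebra.mapDomainRingHom ℤ (piProj J X) z ∈
      augmentationIdeal (∀ v, J v) ^ Fintype.card W := by
  induction z using MonoidAlgebra.induction_on with
  | of σ =>
    simp only [MonoidAlgebra.mapDomainRingHom_of, sum_neg_one_pow_smul_of_piProj]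
    exact Ideal.prod_mem_pow_card _ fun v _ => of_sub_one_mem_augmentationIdeal _
  | add x y hx hy =>
    simpa only [map_add, smul_add, Finset.sum_add_distrib] using add_mem hx hy
  | smul r x hx =>
    simpa only [map_zsmul, smul_comm _ r, ← Finset.smul_sum] using zsmul_mem hx r

end piProj

theorem eq_neg_sum_proper_subsets_general {W : Type*} [Fintype W] [DecidableEq W] [Nonempty W]
    (J : W → Type*) [∀ v, CommGroup (J v)]
    (M : Type*) [AddCommGroup M]
    (g : Finset W →
      (M ⊗[ℤ] (MonoidAlgebra ℤ (∀ v, J v) ⧸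
          augmentationIdeal (∀ v, J v) ^ (Fintype.card W - 1 + 1)) →ₗ[ℤ]
        M ⊗[ℤ] (MonoidAlgebra ℤ (∀ v, J v) ⧸
          augmentationIdeal (∀ v, J v) ^ (Fintype.card W - 1 + 1))))
    (hg : ∀ (X : Finset W) (m : M) (z : MonoidAlgebra ℤ (∀ v, J v)),
      g X (m ⊗ₜ Ideal.Quotient.mk (augmentationIdeal (∀ v, J v) ^ (Fintype.card W - 1 + 1)) z) =
        m ⊗ₜ Ideal.Quotient.mk (augmentationIdeal (∀ v, J v) ^ (Fintype.card W - 1 + 1))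
          (MonoidAlgebra.mapDomainRingHom ℤ (piProj J X) z))
    (a : M ⊗[ℤ] (MonoidAlgebra ℤ (∀ v, J v) ⧸
        augmentationIdeal (∀ v, J v) ^ (Fintype.card W - 1 + 1))) :
    a = -∑ X ∈ (Finset.univ : Finset (Finset W)).erase Finset.univ,
        ((-1 : ℤ) ^ (Finset.univ \ X).card) • g X a := by
  have hcard : Fintype.card W - 1 + 1 = Fintype.card W := Nat.sub_add_cancel Fintype.card_pos
  have hid : g Finset.univ = LinearMap.id := TensorProduct.ext_quotient_mk fun m z => by
    simp [hg, piProj_univ]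
  have hsum : ∑ X : Finset W, (-1 : ℤ) ^ (Finset.univ \ X).card • g X = 0 :=
    TensorProduct.ext_quotient_mk fun m z => by
      simp only [LinearMap.sum_apply, LinearMap.smul_apply, hg, LinearMap.zero_apply,
        ← TensorProduct.tmul_smul, ← map_zsmul (Ideal.Quotient.mk _), ← TensorProduct.tmul_sum,
        ← map_sum]
      rw [Ideal.Quotient.eq_zero_iff_mem.2 (by
        rw [hcard]; exact sum_neg_one_pow_smul_mapDomain_piProj_mem J z), TensorProduct.tmul_zero]
  have h0 := LinearMap.congr_fun hsum a
  rw [LinearMap.sum_apply, ← Finset.add_sum_erase _ _ (Finset.mem_univ Finset.univ)] at h0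
  simp only [LinearMap.smul_apply, Finset.sdiff_self, Finset.card_empty, pow_zero, one_smul, hid,
    LinearMap.id_apply, LinearMap.zero_apply] at h0
  exact eq_neg_of_add_eq_zero_left h0

/-- Let `W` be a nonempty finite set, `(J v)_{v ∈ W}` a family of finite abelian groups,
`H = ∏_{v ∈ W} J v`, and `d := |W| - 1`.  Let `M` be any `ℤ`-module, and for `X ⊆ W` let
`g X` be the endomorphism of `M ⊗_ℤ ℤ[H]/I(H)^(d+1)` induced by `π_X` (i.e. the `ℤ`-linear
map with `g X (m ⊗ z mod I^(d+1)) = m ⊗ (π_X z mod I^(d+1))`, which is well defined since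
`π_X (I(H)) ⊆ I(H)`).  Then every `a ∈ M ⊗_ℤ ℤ[H]/I(H)^(d+1)` satisfies
`a = -∑_{X ⊆ W, X ≠ W} (-1)^|W∖X| g X a`. -/
theorem eq_neg_sum_proper_subsets {W : Type*} [Fintype W] [DecidableEq W] [Nonempty W]
    (J : W → Type*) [∀ v, CommGroup (J v)] [∀ v, Fintype (J v)]
    (M : Type*) [AddCommGroup M]
    (g : Finset W →
      (M ⊗[ℤ] (MonoidAlgebra ℤ (∀ v, J v) ⧸
          augmentationIdeal (∀ v, J v) ^ (Fintype.card W - 1 + 1)) →ₗ[ℤ]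
        M ⊗[ℤ] (MonoidAlgebra ℤ (∀ v, J v) ⧸
          augmentationIdeal (∀ v, J v) ^ (Fintype.card W - 1 + 1))))
    (hg : ∀ (X : Finset W) (m : M) (z : MonoidAlgebra ℤ (∀ v, J v)),
      g X (m ⊗ₜ Ideal.Quotient.mk (augmentationIdeal (∀ v, J v) ^ (Fintype.card W - 1 + 1)) z) =
        m ⊗ₜ Ideal.Quotient.mk (augmentationIdeal (∀ v, J v) ^ (Fintype.card W - 1 + 1))
          (MonoidAlgebra.mapDomainRingHom ℤ (piProj J X) z))
    (a : M ⊗[ℤ] (MonoidAlgebra ℤ (∀ v, J v) ⧸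
        augmentationIdeal (∀ v, J v) ^ (Fintype.card W - 1 + 1))) :
    a = -∑ X ∈ (Finset.univ : Finset (Finset W)).erase Finset.univ,
        ((-1 : ℤ) ^ (Finset.univ \ X).card) • g X a :=
  eq_neg_sum_proper_subsets_general J M g hg a
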